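/- Tensors of alignment type II are not distinguished from their boost-weight-zero parts by any scalar polynomial invariant: let T₁,…,T_k be tensors on ℝ⁴ (of ranks r₁,…,r_k) such that every component of positive boost weight of each T_m vanishes, and let (T_m)₀ denote the tensor obtained from T_m by keeping exactly its boost-weight-zero components and setting all others to zero. Then for every perfect pairing p, the full contraction of (T₁,…,T_k) equals the full contraction of ((T₁)₀,…,(T_k)₀). -/

import Mathlib

/-- The null-frame Minkowski metric on `ℝ⁴` (indices 0,1,2,3 for 1,2,3,4); it equals its own
inverse, so it is also the inverse metric used in contractions. -/
noncomputable def eta : Fin 4 → Fin 4 → ℝ := fun a b =>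
  if (a = 0 ∧ b = 1) ∨ (a = 1 ∧ b = 0) then -1
  else if (a = 2 ∧ b = 2) ∨ (a = 3 ∧ b = 3) then 1 else 0

/-- The boost weight of a rank-`r` component index: the number of indices equal to 1 (here 0)
minus the number of indices equal to 2 (here 1). -/
def bw {r : ℕ} (a : Fin r → Fin 4) : ℤ :=
  ((Finset.univ.filter fun i => a i = 0).card : ℤ) -
    ((Finset.univ.filter fun i => a i = 1).card : ℤ)

/-- The combined index slots of a list of tensors of ranks `r 0, …, r (k-1)`. -/
abbrev Slots {k : ℕ} (r : Fin k → ℕ) : Type := (m : Fin k) × Fin (r m)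

/-- The full contraction of the tensors `T m` determined by a pairing of the combined index
slots.  The pairing is encoded by a fixed-point-free involution `p` together with a set `S` of
representatives containing exactly one slot from each pair `{i, p i}`; each pair contributes one
factor of the inverse metric `η`. -/
noncomputable def contraction {k : ℕ} (r : Fin k → ℕ) (T : ∀ m, (Fin (r m) → Fin 4) → ℝ)
    (p : Slots r → Slots r) (S : Finset (Slots r)) : ℝ :=
  ∑ f : Slots r → Fin 4,
    (∏ i ∈ S, eta (f i) (f (p i))) * ∏ m, T m (fun j => f ⟨m, j⟩)

/-!
Each null-frame index carries a boost weight `+1`, `-1` or `0`, and `η a b ≠ 0` only when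
the weights of `a` and `b` cancel. So every term of a full contraction with a nonzero metric
factor has total boost weight zero across the tensors. If one tensor's component has nonzero
boost weight, another one then has positive boost weight, and both the term and its truncated
counterpart vanish; otherwise the two terms coincide.
-/

open Finset

def indexBoostWeight (a : Fin 4) : ℤ := if a = 0 then 1 else if a = 1 then -1 else 0

lemma indexBoostWeight_add_eq_zero_of_eta_ne_zero {a b : Fin 4} (h : eta a b ≠ 0) :
    indexBoostWeight a + indexBoostWeight b = 0 := by
  fin_cases a <;> fin_cases b <;> simp_all [eta, indexBoostWeight]

lemma bw_eq_sum_indexBoostWeight {r : ℕ} (a : Fin r → Fin 4) :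
    bw a = ∑ i, indexBoostWeight (a i) := by
  rw [bw, ← sum_boole, ← sum_boole, ← sum_sub_distrib]
  refine sum_congr rfl fun i _ => ?_
  unfold indexBoostWeight
  split_ifs <;> simp_all

lemma sum_eq_sum_add_involution {α M : Type*} [Fintype α] [DecidableEq α] [AddCommMonoid M]
    (p : α → α) (S : Finset α) (hp : p ∘ p = id) (hS : ∀ i, i ∈ S ↔ p i ∉ S) (g : α → M) :
    ∑ i, g i = ∑ i ∈ S, (g i + g (p i)) := by
  have hpp : ∀ x, p (p x) = x := congrFun hp
  have himage : S.image p = Sᶜ := by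
    ext j
    simp only [mem_image, mem_compl]
    exact ⟨by rintro ⟨i, hi, rfl⟩; exact (hS i).mp hi,
      fun hj => ⟨p j, by rwa [hS, hpp], hpp j⟩⟩
  rw [← sum_add_sum_compl S, ← himage,
    sum_image fun x _ y _ h => by rw [← hpp x, h, hpp], sum_add_distrib]

lemma sum_bw_eq_zero_of_prod_eta_ne_zero {k : ℕ} {r : Fin k → ℕ} (p : Slots r → Slots r)
    (S : Finset (Slots r)) (hp : p ∘ p = id) (hS : ∀ i, i ∈ S ↔ p i ∉ S)
    (f : Slots r → Fin 4) (hη : ∏ i ∈ S, eta (f i) (f (p i)) ≠ 0) :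
    ∑ m, bw (fun j => f ⟨m, j⟩) = 0 := by
  simp only [bw_eq_sum_indexBoostWeight]
  rw [sum_sigma', univ_sigma_univ]
  exact (sum_eq_sum_add_involution p S hp hS (fun i => indexBoostWeight (f i))).trans <|
    sum_eq_zero fun i hi =>
      indexBoostWeight_add_eq_zero_of_eta_ne_zero (prod_ne_zero_iff.mp hη i hi)

lemma prod_eq_prod_bw_zero_part_of_sum_bw_eq_zero {k : ℕ} {r : Fin k → ℕ}
    {T : ∀ m, (Fin (r m) → Fin 4) → ℝ} (hII : ∀ m a, 0 < bw a → T m a = 0)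
    (a : ∀ m, Fin (r m) → Fin 4) (hsum : ∑ m, bw (a m) = 0) :
    ∏ m, T m (a m) = ∏ m, (if bw (a m) = 0 then T m (a m) else 0) := by
  by_cases hne : ∃ m ∈ univ, bw (a m) ≠ 0
  · obtain ⟨m, -, hm⟩ := exists_pos_of_sum_zero_of_exists_nonzero (fun m => bw (a m)) hsum hne
    rw [prod_eq_zero (mem_univ m) (hII m _ hm), prod_eq_zero (mem_univ m) (if_neg hm.ne')]
  · simp only [mem_univ, true_and, not_exists, not_not] at hne
    exact prod_congr rfl fun m _ => (if_pos (hne m)).symm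

theorem contraction_typeII_eq_bw_zero_part
    {k : ℕ} (r : Fin k → ℕ) (T : ∀ m, (Fin (r m) → Fin 4) → ℝ)
    (hII : ∀ m a, 0 < bw a → T m a = 0)
    (p : Slots r → Slots r) (S : Finset (Slots r))
    (hp : p ∘ p = id) (hS : ∀ i, i ∈ S ↔ p i ∉ S) :
    contraction r T p S =
      contraction r (fun m a => if bw a = 0 then T m a else 0) p S := by
  refine sum_congr rfl fun f _ => ?_
  by_cases hη : ∏ i ∈ S, eta (f i) (f (p i)) = 0
  · rw [hη, zero_mul, zero_mul]
  · rw [prod_eq_prod_bw_zero_part_of_sum_bw_eq_zero hII _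
      (sum_bw_eq_zero_of_prod_eta_ne_zero p S hp hS f hη)]
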